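/- arXiv:2602.10410 — 2 statements merged into one kernel-verified Lean document; each statement's English description precedes it below -/
import Mathlib

section
/- If a ∈ ℝⁿ is a probability vector with strictly positive entries (n ≥ 2), then the matrix J = diag(a) - a aᵀ has rank n - 1. -/
open Matrix BigOperators

/-- For a strictly positive probability vector `a ∈ ℝⁿ` with `n ≥ 2`,
the matrix `J = diag(a) - a aᵀ` has rank `n - 1`. -/
theorem softmax_jacobian_rank {n : ℕ} (hn : 2 ≤ n) (a : Fin n → ℝ)
    (ha0 : ∀ i, 0 < a i) (ha1 : ∑ i, a i = 1) :
    (Matrix.diagonal a - Matrix.vecMulVec a a).rank = n - 1 := by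
  set J := Matrix.diagonal a - Matrix.vecMulVec a a with hJ
  have hmv : ∀ (x : Fin n → ℝ) (i : Fin n),
      J.mulVec x i = a i * x i - a i * (∑ j, a j * x j) := by
    intro x i
    simp only [hJ, Matrix.sub_mulVec, Pi.sub_apply, Matrix.mulVec_diagonal]
    congr 1
    simp [Matrix.mulVec, Matrix.vecMulVec_apply, dotProduct, Finset.mul_sum, mul_assoc,
      mul_comm, mul_left_comm]
  have hker : LinearMap.ker J.mulVecLin = Submodule.span ℝ {fun _ => (1 : ℝ)} := by
    ext x
    constructor
    · intro hx
      have hx0 : ∀ i, J.mulVec x i = 0 := by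
        intro i
        have := (LinearMap.mem_ker.mp hx)
        have : J.mulVec x = 0 := this
        simp [this]
      have hconst : ∀ i, x i = ∑ j, a j * x j := by
        intro i
        have h := hx0 i
        rw [hmv] at h
        have h2 : a i * (x i - ∑ j, a j * x j) = 0 := by ring_nf; linarith [h]
        have := mul_eq_zero.mp h2
        rcases this with h3 | h3
        · exact absurd h3 (ne_of_gt (ha0 i))
        · linarith
      rw [Submodule.mem_span_singleton]
      exact ⟨∑ j, a j * x j, funext fun i => by
        simpa using (hconst i).symm⟩
    · intro hx
      rw [Submodule.mem_span_singleton] at hx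
      obtain ⟨c, hc⟩ := hx
      rw [LinearMap.mem_ker]
      have : x = fun _ => c := by rw [← hc]; funext i; simp
      subst this
      ext i
      simp only [Matrix.mulVecLin_apply, Pi.zero_apply]
      rw [hmv]
      have : ∑ j, a j * c = c := by
        rw [← Finset.sum_mul, ha1, one_mul]
      rw [this]
      ring
  have hkdim : Module.finrank ℝ (LinearMap.ker J.mulVecLin) = 1 := by
    rw [hker]
    exact finrank_span_singleton (by
      intro h
      have := congrFun h ⟨0, by omega⟩
      simp at this)
  have hrk := LinearMap.finrank_range_add_finrank_ker J.mulVecLin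
  rw [hkdim] at hrk
  have hdom : Module.finrank ℝ (Fin n → ℝ) = n := by simp
  rw [hdom] at hrk
  have hrank : J.rank = Module.finrank ℝ (LinearMap.range J.mulVecLin) := rfl
  omega
end

section
/- Let Φ ∈ ℝ^{N×r} with rows φ_1,…,φ_N of unit norm, and define the state sequence S_0 = 0, S_t = S_{t−1}(I − φ_t φ_tᵀ) + v_t φ_tᵀ. Then the outputs o_t = S_t ψ_t (for arbitrary query features ψ_t) satisfy the parallel form O = (M ∘ ΨΦᵀ)(I + stril(ΦΦᵀ))⁻¹ V, where stril denotes the strictly lower triangular part and M the causal mask. -/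
open Matrix

/-! The unit lower triangular matrix `T = I + stril(ΦΦᵀ)` has determinant one, so
`W := T⁻¹ V` is a genuine solution of `T W = V`. Written as an additive update, the recurrence is
`S_{t+1} = S_t + (v_t - S_t φ_t) φ_tᵀ`. By induction `S_t = ∑_{s<t} w_s φ_sᵀ`, and then
`v_t - S_t φ_t = v_t - ∑_{s<t} (φ_t ⬝ φ_s) w_s = w_t` is exactly row `t` of `T W = V`.
Finally `o_t = S_{t+1} ψ_t = ∑_{s≤t} (ψ_t ⬝ φ_s) w_s` is row `t` of `(M ∘ ΨΦᵀ) W`. -/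

namespace Matrix

variable {ι m n o R : Type*} [CommRing R]

theorem mul_one_sub_vecMulVec_add_vecMulVec [Fintype n] [DecidableEq n]
    (S : Matrix m n R) (k : n → R) (v : m → R) :
    S * (1 - vecMulVec k k) + vecMulVec v k = S + vecMulVec (v - S *ᵥ k) k := by
  rw [Matrix.mul_sub, Matrix.mul_one, mul_vecMulVec, sub_vecMulVec]
  abel

theorem sum_vecMulVec_mulVec [Fintype n] (s : Finset ι) (W : Matrix ι m R) (K : Matrix ι n R)
    (x : n → R) : (∑ i ∈ s, vecMulVec (W i) (K i)) *ᵥ x = ∑ i ∈ s, (K i ⬝ᵥ x) • W i := by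
  simp only [sum_mulVec, vecMulVec_mulVec, op_smul_eq_smul]

theorem of_ite_mul_apply [Fintype n] (p : n → n → Prop) [DecidableRel p] (A : Matrix n n R)
    (W : Matrix n o R) (t : n) :
    ((of fun i j => if p i j then A i j else 0) * W) t = ∑ s with p t s, A t s • W s := by
  ext j
  simp [mul_apply, Finset.sum_apply, Finset.sum_filter, ite_mul]

theorem one_add_strictLower_mul_apply [Fintype n] [DecidableEq n] [LinearOrder n]
    [LocallyFiniteOrderBot n] (A : Matrix n n R) (W : Matrix n o R) (t : n) :
    ((1 + of fun i j => if j < i then A i j else 0 : Matrix n n R) * W) t =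
      W t + ∑ s ∈ Finset.Iio t, A t s • W s := by
  rw [Matrix.add_mul, Matrix.one_mul]
  change W t + _ = _
  rw [of_ite_mul_apply, Finset.filter_gt_eq_Iio]

theorem det_one_add_strictLower [Fintype n] [DecidableEq n] [LinearOrder n] (A : Matrix n n R) :
    (1 + of fun i j => if j < i then A i j else 0).det = 1 := by
  rw [det_of_isLowerTriangular]
  · simp
  · intro i j (hij : i < j)
    simp [hij.ne, hij.not_gt]

end Matrix

section DeltaRule

variable {m n R : Type*} [CommRing R] [Fintype n] [DecidableEq n] {N : ℕ}

theorem deltaRule_state_eq_sum (Φ : Matrix (Fin N) n R) (V W : Matrix (Fin N) m R)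
    (hW : (1 + of fun i j : Fin N => if j < i then (Φ * Φᵀ) i j else 0) * W = V)
    (S : ℕ → Matrix m n R) (hS0 : S 0 = 0)
    (hS : ∀ t : Fin N,
      S ((t : ℕ) + 1) = S t * (1 - vecMulVec (Φ t) (Φ t)) + vecMulVec (V t) (Φ t)) :
    ∀ k ≤ N,
      S k = ∑ s ∈ Finset.univ.filter (fun s : Fin N => (s : ℕ) < k), vecMulVec (W s) (Φ s) := by
  intro k
  induction k with
  | zero => simp [hS0]
  | succ k ih =>
    intro hk
    set t : Fin N := ⟨k, hk⟩
    have hIio : Finset.univ.filter (fun s : Fin N => (s : ℕ) < k) = Finset.Iio t := by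
      ext s; simp [Fin.lt_def, t]
    have hIic :
        Finset.univ.filter (fun s : Fin N => (s : ℕ) < k + 1) = insert t (Finset.Iio t) := by
      ext s
      simp only [Finset.mem_filter, Finset.mem_univ, true_and, Finset.mem_insert, Finset.mem_Iio,
        Fin.ext_iff, Fin.lt_def, t]
      omega
    have hSk : S k = ∑ s ∈ Finset.Iio t, vecMulVec (W s) (Φ s) := by rw [ih (by omega), hIio]
    have hcorr : V t - S k *ᵥ Φ t = W t := by
      rw [← hW, one_add_strictLower_mul_apply, hSk, sum_vecMulVec_mulVec]
      simp only [← dotProduct_comm (Φ t)]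
      exact add_sub_cancel_right _ _
    calc S (k + 1) = S k + vecMulVec (W t) (Φ t) := by
          rw [hS t, mul_one_sub_vecMulVec_add_vecMulVec, hcorr]
      _ = _ := by rw [hIic, Finset.sum_insert Finset.notMem_Iio_self, hSk, add_comm]

end DeltaRule

theorem delta_rule_parallel_form_general {N r d : ℕ}
    (Φ Ψ : Matrix (Fin N) (Fin r) ℝ) (V : Matrix (Fin N) (Fin d) ℝ)
    (S : ℕ → Matrix (Fin d) (Fin r) ℝ)
    (hS0 : S 0 = 0)
    (hS : ∀ t : Fin N,
      S ((t : ℕ) + 1) =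
        S (t : ℕ) * (1 - Matrix.vecMulVec (Φ t) (Φ t)) + Matrix.vecMulVec (V t) (Φ t))
    (O : Matrix (Fin N) (Fin d) ℝ)
    (hO : ∀ t : Fin N, O t = S ((t : ℕ) + 1) *ᵥ Ψ t) :
    O = (Matrix.of fun i j : Fin N => if j ≤ i then (Ψ * Φᵀ) i j else 0) *
        (1 + Matrix.of fun i j : Fin N => if j < i then (Φ * Φᵀ) i j else 0)⁻¹ * V := by
  set T := 1 + Matrix.of fun i j : Fin N => if j < i then (Φ * Φᵀ) i j else 0
  have hTW : T * (T⁻¹ * V) = V := by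
    rw [← Matrix.mul_assoc, mul_nonsing_inv _ (by simp [T, det_one_add_strictLower]),
      Matrix.one_mul]
  have hSsum := deltaRule_state_eq_sum Φ V (T⁻¹ * V) hTW S hS0 hS
  funext t
  have hIic : Finset.univ.filter (fun s : Fin N => (s : ℕ) < t + 1) = Finset.Iic t := by
    ext s
    simp only [Finset.mem_filter, Finset.mem_univ, true_and, Finset.mem_Iic, Fin.le_def]
    omega
  rw [hO, hSsum _ t.isLt, hIic, sum_vecMulVec_mulVec, Matrix.mul_assoc, of_ite_mul_apply,
    Finset.filter_ge_eq_Iic]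
  simp only [dotProduct_comm (Φ _)]
  rfl

/-- Parallel form of the delta-rule recurrence: with unit-norm key features
`φ_t` (rows of `Φ`), state `S_0 = 0`, `S_t = S_{t−1}(I − φ_t φ_tᵀ) + v_t φ_tᵀ`,
and outputs `o_t = S_t ψ_t`, the output matrix satisfies
`O = (M ∘ ΨΦᵀ)(I + stril(ΦΦᵀ))⁻¹ V`. -/
theorem delta_rule_parallel_form {N r d : ℕ}
    (Φ Ψ : Matrix (Fin N) (Fin r) ℝ) (V : Matrix (Fin N) (Fin d) ℝ)
    (hΦ : ∀ t : Fin N, Φ t ⬝ᵥ Φ t = 1)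
    (S : ℕ → Matrix (Fin d) (Fin r) ℝ)
    (hS0 : S 0 = 0)
    (hS : ∀ t : Fin N,
      S ((t : ℕ) + 1) =
        S (t : ℕ) * (1 - Matrix.vecMulVec (Φ t) (Φ t)) + Matrix.vecMulVec (V t) (Φ t))
    (O : Matrix (Fin N) (Fin d) ℝ)
    (hO : ∀ t : Fin N, O t = S ((t : ℕ) + 1) *ᵥ Ψ t) :
    O = (Matrix.of fun i j : Fin N => if j ≤ i then (Ψ * Φᵀ) i j else 0) *
        (1 + Matrix.of fun i j : Fin N => if j < i then (Φ * Φᵀ) i j else 0)⁻¹ * V :=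
  delta_rule_parallel_form_general Φ Ψ V S hS0 hS O hO
end
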